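/- arXiv:1507.08908 — 2 statements merged into one kernel-verified Lean document; each statement's English description precedes it below -/
import Mathlib

section
/- Let A be a superspace with two even bilinear operations ∘ and [·,·] and an even linear map α. Let R = ℂ[∂] ⊗ A be the free ℂ[∂]-module over A, extend α to R by α(f(∂)u) = f(∂)α(u), and define the λ-bracket on generators by [u_λ v] = [v,u] + (∂+λ)(v∘u) + (−1)^{|u||v|} λ (u∘v) for homogeneous u,v ∈ A, extended by [f(∂)u_λ h(∂)v] = f(−λ)h(∂+λ)[u_λ v]. If (R, [·_λ·], α) is a Hom-Lie conformal superalgebra, then (A, [·,·], ∘, α) is a super Hom-Gel'fand-Dorfman bialgebra. -/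
noncomputable section

/-- The sign `(-1)^{|x||y|}` attached to parities `i, j` in `ℤ₂`. -/
def sg (i j : ZMod 2) : ℂ := (-1 : ℂ) ^ (i.val * j.val)

variable {A : Type*} [AddCommGroup A] [Module ℂ A]

/-- `gr` makes `A` into a superspace: `A = A₀ ⊕ A₁`. -/
def IsSupergrading (gr : ZMod 2 → Submodule ℂ A) : Prop :=
  (∀ x : A, ∃ x0 ∈ gr 0, ∃ x1 ∈ gr 1, x = x0 + x1) ∧ (gr 0 ⊓ gr 1 = ⊥)

/-- An even linear map: it preserves the grading. -/
def EvenLin (gr : ZMod 2 → Submodule ℂ A) (α : A →ₗ[ℂ] A) : Prop :=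
  ∀ i : ZMod 2, ∀ x ∈ gr i, α x ∈ gr i

/-- An even bilinear map: it adds parities. -/
def EvenBilin (gr : ZMod 2 → Submodule ℂ A) (m : A →ₗ[ℂ] A →ₗ[ℂ] A) : Prop :=
  ∀ i j : ZMod 2, ∀ x ∈ gr i, ∀ y ∈ gr j, m x y ∈ gr (i + j)

/-- A Hom-Lie superalgebra structure on the superspace `(A, gr)`. -/
def HomLieSuper (gr : ZMod 2 → Submodule ℂ A) (br : A →ₗ[ℂ] A →ₗ[ℂ] A)
    (α : A →ₗ[ℂ] A) : Prop :=
  EvenLin gr α ∧ EvenBilin gr br ∧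
  (∀ (i j : ZMod 2), ∀ x ∈ gr i, ∀ y ∈ gr j, br x y = -(sg i j • br y x)) ∧
  (∀ (i j k : ZMod 2), ∀ x ∈ gr i, ∀ y ∈ gr j, ∀ z ∈ gr k,
    sg i k • br (br x y) (α z) + sg i j • br (br y z) (α x)
      + sg j k • br (br z x) (α y) = 0)

/-- A Hom-Novikov superalgebra structure on the superspace `(A, gr)`. -/
def HomNovikovSuper (gr : ZMod 2 → Submodule ℂ A) (c : A →ₗ[ℂ] A →ₗ[ℂ] A)
    (α : A →ₗ[ℂ] A) : Prop :=
  EvenLin gr α ∧ EvenBilin gr c ∧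
  (∀ (i j k : ZMod 2), ∀ x ∈ gr i, ∀ y ∈ gr j, ∀ z ∈ gr k,
    c (c x y) (α z) - c (α x) (c y z) = sg i j • (c (c y x) (α z) - c (α y) (c x z))) ∧
  (∀ (i j k : ZMod 2), ∀ x ∈ gr i, ∀ y ∈ gr j, ∀ z ∈ gr k,
    c (c x y) (α z) = sg j k • c (c x z) (α y))

/-- A super Hom-Gel'fand-Dorfman bialgebra structure on the superspace `(A, gr)`. -/
def SuperHomGD (gr : ZMod 2 → Submodule ℂ A) (br c : A →ₗ[ℂ] A →ₗ[ℂ] A)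
    (α : A →ₗ[ℂ] A) : Prop :=
  HomLieSuper gr br α ∧ HomNovikovSuper gr c α ∧
  (∀ (i j k : ZMod 2), ∀ x ∈ gr i, ∀ y ∈ gr j, ∀ z ∈ gr k,
    br (c x y) (α z) - sg j k • br (c x z) (α y) + c (br x y) (α z)
      - sg j k • c (br x z) (α y) - c (α x) (br y z) = 0)

/-- A Lie superalgebra structure on the superspace `(A, gr)`. -/
def LieSuper (gr : ZMod 2 → Submodule ℂ A) (br : A →ₗ[ℂ] A →ₗ[ℂ] A) : Prop :=
  EvenBilin gr br ∧
  (∀ (i j : ZMod 2), ∀ x ∈ gr i, ∀ y ∈ gr j, br x y = -(sg i j • br y x)) ∧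
  (∀ (i j k : ZMod 2), ∀ x ∈ gr i, ∀ y ∈ gr j, ∀ z ∈ gr k,
    sg i k • br (br x y) z + sg i j • br (br y z) x + sg j k • br (br z x) y = 0)

/-- A Novikov superalgebra structure on the superspace `(A, gr)`. -/
def NovikovSuper (gr : ZMod 2 → Submodule ℂ A) (c : A →ₗ[ℂ] A →ₗ[ℂ] A) : Prop :=
  EvenBilin gr c ∧
  (∀ (i j k : ZMod 2), ∀ x ∈ gr i, ∀ y ∈ gr j, ∀ z ∈ gr k,
    c (c x y) z - c x (c y z) = sg i j • (c (c y x) z - c y (c x z))) ∧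
  (∀ (i j k : ZMod 2), ∀ x ∈ gr i, ∀ y ∈ gr j, ∀ z ∈ gr k,
    c (c x y) z = sg j k • c (c x z) y)

/-- A super Gel'fand-Dorfman bialgebra structure on the superspace `(A, gr)`. -/
def SuperGD (gr : ZMod 2 → Submodule ℂ A) (br c : A →ₗ[ℂ] A →ₗ[ℂ] A) : Prop :=
  LieSuper gr br ∧ NovikovSuper gr c ∧
  (∀ (i j k : ZMod 2), ∀ x ∈ gr i, ∀ y ∈ gr j, ∀ z ∈ gr k,
    br (c x y) z - sg j k • br (c x z) y + c (br x y) z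
      - sg j k • c (br x z) y - c x (br y z) = 0)


/-- The grading induced on `σ →₀ A` by a grading of `A` (coefficientwise). -/
def grFinsupp {A : Type*} [AddCommGroup A] [Module ℂ A] (σ : Type*)
    (gr : ZMod 2 → Submodule ℂ A) (i : ZMod 2) : Submodule ℂ (σ →₀ A) where
  carrier := {f | ∀ s : σ, f s ∈ gr i}
  add_mem' := by
    intro f g hf hg s
    rw [Finsupp.add_apply]
    exact add_mem (hf s) (hg s)
  zero_mem' := by
    intro s
    rw [Finsupp.zero_apply]
    exact zero_mem _
  smul_mem' := by
    intro t f hf s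
    rw [Finsupp.smul_apply]
    exact Submodule.smul_mem _ t (hf s)

section Conformal

variable {M : Type*} [AddCommGroup M] [Module ℂ M]

/-- Multiplication by `λ` on `ℂ[λ] ⊗ M`, encoded as `ℕ →₀ M`. -/
def lmulV : (ℕ →₀ M) →ₗ[ℂ] (ℕ →₀ M) := Finsupp.lmapDomain M ℂ (· + 1)

/-- Coefficientwise action of `∂` on `ℂ[λ] ⊗ M`. -/
def dVmap (dM : M →ₗ[ℂ] M) : (ℕ →₀ M) →ₗ[ℂ] (ℕ →₀ M) :=
  Finsupp.mapRange.linearMap dM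

/-- The substitution `λ ↦ −λ−∂` on `ℂ[λ] ⊗ M`:
`λⁿ r ↦ (−λ−∂)ⁿ r = (−1)ⁿ ∑ₖ C(n,k) λᵏ ∂^{n−k} r`. -/
def negSubst (dM : M →ₗ[ℂ] M) (p : ℕ →₀ M) : ℕ →₀ M :=
  p.sum fun n r => ((-1 : ℂ) ^ n) •
    ∑ k ∈ Finset.range (n + 1),
      (n.choose k : ℂ) • Finsupp.single k ((⇑dM)^[n - k] r)

/-- A Hom-Lie conformal superalgebra structure on the `ℂ[∂]`-module `M` (with `∂`
acting via `dM`), graded by `grM`, with λ-bracket `B : M → M → ℂ[λ] ⊗ M` (values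
encoded as `ℕ →₀ M`, the `n`-th coefficient being that of `λⁿ`) and twisting map `αM`.
The Hom-Jacobi identity is stated in `ℂ[λ,μ] ⊗ M`, encoded as `(ℕ × ℕ) →₀ M`, the
`(n,m)` coefficient being that of `λⁿ μᵐ`. -/
def HomLieConformalSuper (grM : ZMod 2 → Submodule ℂ M) (dM : M →ₗ[ℂ] M)
    (B : M →ₗ[ℂ] M →ₗ[ℂ] (ℕ →₀ M)) (αM : M →ₗ[ℂ] M) : Prop :=
  -- `α∂ = ∂α`
  (∀ x : M, αM (dM x) = dM (αM x)) ∧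
  -- `αM` is even
  (∀ i : ZMod 2, ∀ x ∈ grM i, αM x ∈ grM i) ∧
  -- the bracket is even
  (∀ (i j : ZMod 2), ∀ x ∈ grM i, ∀ y ∈ grM j, ∀ n : ℕ, B x y n ∈ grM (i + j)) ∧
  -- conformal sesquilinearity
  (∀ x y : M, B (dM x) y = -(lmulV (B x y))) ∧
  (∀ x y : M, B x (dM y) = dVmap dM (B x y) + lmulV (B x y)) ∧
  -- skew-symmetry `[x_λ y] = −(−1)^{|x||y|}[y_{−λ−∂} x]`
  (∀ (i j : ZMod 2), ∀ x ∈ grM i, ∀ y ∈ grM j,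
    B x y = -(sg i j • negSubst dM (B y x))) ∧
  -- Hom-Jacobi identity
  (∀ (i j k : ZMod 2), ∀ x ∈ grM i, ∀ y ∈ grM j, ∀ z ∈ grM k,
    ((B y z).sum fun m r => (B (αM x) r).sum fun n s =>
        Finsupp.single ((n, m) : ℕ × ℕ) s)
    = ((B x y).sum fun n r => (B r (αM z)).sum fun m s =>
        ∑ t ∈ Finset.range (m + 1),
          (m.choose t : ℂ) • Finsupp.single ((n + t, m - t) : ℕ × ℕ) s)
      + sg i j • ((B x z).sum fun n r => (B (αM y) r).sum fun m s =>
          Finsupp.single ((n, m) : ℕ × ℕ) s))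

end Conformal

/-- The action of `∂` on `R = ℂ[∂] ⊗ A`, encoded as `ℕ →₀ A`. -/
def dR {A : Type*} [AddCommGroup A] [Module ℂ A] : (ℕ →₀ A) →ₗ[ℂ] (ℕ →₀ A) :=
  Finsupp.lmapDomain A ℂ (· + 1)

/-- The λ-bracket `[u_λ v] = [v,u] + (∂+λ)(v∘u) + (−1)^{|u||v|} λ (u∘v)` on
generators `u, v ∈ A` of parities with sign `s = (−1)^{|u||v|}`. -/
def genBr {A : Type*} [AddCommGroup A] [Module ℂ A]
    (br c : A →ₗ[ℂ] A →ₗ[ℂ] A) (s : ℂ) (u v : A) : ℕ →₀ (ℕ →₀ A) :=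
  Finsupp.single 0 (Finsupp.single 0 (br v u) + Finsupp.single 1 (c v u))
    + Finsupp.single 1 (Finsupp.single 0 (c v u + s • c u v))

/-- `B` is the λ-bracket of the quadratic conformal superalgebra associated to
`(A, [·,·], ∘)`: it takes the prescribed values on `A ⊗ A` and is extended by
`[f(∂)u_λ h(∂)v] = f(−λ)h(∂+λ)[u_λ v]`. -/
def AssocBracket {A : Type*} [AddCommGroup A] [Module ℂ A]
    (gr : ZMod 2 → Submodule ℂ A) (br c : A →ₗ[ℂ] A →ₗ[ℂ] A)
    (B : (ℕ →₀ A) →ₗ[ℂ] (ℕ →₀ A) →ₗ[ℂ] (ℕ →₀ (ℕ →₀ A))) : Prop :=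
  ∀ (p q : ℕ) (i j : ZMod 2), ∀ u ∈ gr i, ∀ v ∈ gr j,
    B (Finsupp.single p u) (Finsupp.single q v)
      = ((-1 : ℂ) ^ p) • ((⇑(lmulV (M := ℕ →₀ A)))^[p]
          ((fun x => dVmap (dR (A := A)) x + lmulV x)^[q]
            (genBr br c (sg i j) u v)))

/-!
All identities of a super Hom-Gel'fand-Dorfman bialgebra are read off from the axioms of `R` on
generators `x, y, z ∈ A ⊆ R`. Evenness of `α`, `[·,·]` and `∘` is evenness of `α` and of the
λ-bracket, and skew-symmetry of `[·,·]` is the `λ⁰∂⁰` coefficient of conformal skew-symmetry.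
In the Hom-Jacobi identity for three generators only the term `[[x_λ y]_{λ+μ} α z]` involves the
substitution `λ ↦ λ + μ`, which disappears at `λ = 0`. The `λ⁰μ⁰` coefficient is a polynomial of
degree `2` in `∂`: its `∂⁰`, `∂¹` and `∂²` parts are, up to skew-symmetry and a permutation of
`x, y, z`, the Hom-Jacobi identity of `[·,·]`, the compatibility condition and the right
Hom-Novikov identity. The `λ⁰μ²` coefficient, simplified by the right identity, is the left
Hom-Novikov identity.
-/

open Finsupp

lemma sg_comm (i j : ZMod 2) : sg i j = sg j i := by
  rw [sg, sg, Nat.mul_comm]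

lemma sg_mul_self (i j : ZMod 2) : sg i j * sg i j = 1 := by
  rw [sg, ← pow_add, ← two_mul, pow_mul, neg_one_sq, one_pow]

lemma sg_add_left (i j k : ZMod 2) : sg (i + j) k = sg i k * sg j k := by
  rw [sg, sg, sg, ← pow_add, ← add_mul, ZMod.val_add, neg_one_pow_eq_pow_mod_two,
    Nat.mod_mul_mod, ← neg_one_pow_eq_pow_mod_two]

lemma sg_add_right (i j k : ZMod 2) : sg i (j + k) = sg i j * sg i k := by
  rw [sg_comm, sg_add_left, sg_comm j, sg_comm k]

section Coefficients

variable {X : Type*} [AddCommMonoid X]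

lemma sum_sum_single_apply {Y : Type*} [AddCommMonoid Y] (p : ℕ →₀ X) (g : X → ℕ →₀ Y)
    (hg : g 0 = 0) (a b : ℕ) :
    (p.sum fun n r => (g r).sum fun m s => single (n, m) s) (a, b) = g (p a) b := by
  simp only [Finsupp.sum_apply, single_apply, Prod.mk.injEq]
  rw [Finsupp.sum_eq_single a (fun n _ hn => by simp [hn]) (fun _ => by simp [hg])]
  simp

lemma sum_sum_single_swap_apply {Y : Type*} [AddCommMonoid Y] (p : ℕ →₀ X) (g : X → ℕ →₀ Y)
    (hg : g 0 = 0) (a b : ℕ) :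
    (p.sum fun m r => (g r).sum fun n s => single (n, m) s) (a, b) = g (p b) a := by
  simp only [Finsupp.sum_apply, single_apply, Prod.mk.injEq]
  rw [Finsupp.sum_eq_single b (fun n _ hn => by simp [hn]) (fun _ => by simp [hg])]
  simp

lemma sum_sum_binomial_apply_zero {Y : Type*} [AddCommGroup Y] [Module ℂ Y]
    (p : ℕ →₀ X) (g : X → ℕ →₀ Y) (hg : g 0 = 0) (b : ℕ) :
    (p.sum fun n r => (g r).sum fun m s =>
        ∑ t ∈ Finset.range (m + 1), (m.choose t : ℂ) • single (n + t, m - t) s) (0, b)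
      = g (p 0) b := by
  have h_only_t_zero (n m : ℕ) (s : Y) :
      (∑ t ∈ Finset.range (m + 1), (m.choose t : ℂ) • single (n + t, m - t) s) (0, b)
        = if n = 0 ∧ m = b then s else 0 := by
    rw [Finset.sum_apply', Finset.sum_eq_single 0]
    · simp [single_apply]
    · intro t _ ht
      simp [ht]
    · simp
  simp only [Finsupp.sum_apply, h_only_t_zero]
  rw [Finsupp.sum_eq_single 0 (fun n _ hn => by simp [hn]) (fun _ => by simp [hg])]
  simp

end Coefficients

section Conformal

variable {M : Type*} [AddCommGroup M] [Module ℂ M]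

@[simp]
lemma lmulV_apply_zero (p : ℕ →₀ M) : lmulV p 0 = 0 :=
  mapDomain_of_notMem_range _ _ (by simp)

@[simp]
lemma lmulV_apply_succ (p : ℕ →₀ M) (n : ℕ) : lmulV p (n + 1) = p n :=
  mapDomain_apply (add_left_injective 1) p n

@[simp]
lemma dVmap_apply (dM : M →ₗ[ℂ] M) (p : ℕ →₀ M) (n : ℕ) : dVmap dM p n = dM (p n) := rfl

end Conformal

@[simp]
lemma dR_apply_zero (r : ℕ →₀ A) : dR r 0 = 0 :=
  mapDomain_of_notMem_range _ _ (by simp)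

@[simp]
lemma dR_single (n : ℕ) (w : A) : dR (single n w) = single (n + 1) w :=
  mapDomain_single

lemma negSubst_dR_apply_zero_zero (p : ℕ →₀ ℕ →₀ A) : negSubst dR p 0 0 = p 0 0 := by
  rw [negSubst, Finsupp.sum_apply, Finsupp.sum_apply, Finsupp.sum_eq_single 0]
  · simp
  · intro n _ hn
    obtain ⟨n, rfl⟩ := Nat.exists_eq_succ_of_ne_zero hn
    simp [single_apply, Function.iterate_succ_apply']
  · simp

lemma single_mem_grFinsupp {gr : ZMod 2 → Submodule ℂ A} {i : ZMod 2} {u : A} (n : ℕ)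
    (hu : u ∈ gr i) : single n u ∈ grFinsupp ℕ gr i := by
  intro s
  rw [single_apply]
  split_ifs
  exacts [hu, zero_mem _]

section GenBr

variable (br c : A →ₗ[ℂ] A →ₗ[ℂ] A) (s : ℂ) (u v : A)

@[simp]
lemma genBr_apply_zero : genBr br c s u v 0 = single 0 (br v u) + single 1 (c v u) := by
  simp [genBr]

@[simp]
lemma genBr_apply_one : genBr br c s u v 1 = single 0 (c v u + s • c u v) := by
  simp [genBr]

@[simp]
lemma genBr_apply_two : genBr br c s u v 2 = 0 := by
  simp [genBr]

end GenBr

namespace AssocBracket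

variable {gr : ZMod 2 → Submodule ℂ A} {br c : A →ₗ[ℂ] A →ₗ[ℂ] A}
  {B : (ℕ →₀ A) →ₗ[ℂ] (ℕ →₀ A) →ₗ[ℂ] (ℕ →₀ (ℕ →₀ A))} (hB : AssocBracket gr br c B)
  {i j k : ZMod 2} {u v a b : A}
include hB

lemma single_zero_single_zero (hu : u ∈ gr i) (hv : v ∈ gr j) :
    B (single 0 u) (single 0 v) = genBr br c (sg i j) u v := by
  simpa using hB 0 0 i j u hu v hv

lemma single_zero_single_one (hu : u ∈ gr i) (hv : v ∈ gr j) :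
    B (single 0 u) (single 1 v)
      = dVmap dR (genBr br c (sg i j) u v) + lmulV (genBr br c (sg i j) u v) := by
  simpa using hB 0 1 i j u hu v hv

lemma single_one_single_zero (hu : u ∈ gr i) (hv : v ∈ gr j) :
    B (single 1 u) (single 0 v) = -lmulV (genBr br c (sg i j) u v) := by
  simpa using hB 1 0 i j u hu v hv

lemma generator_linear_coeff_zero (hu : u ∈ gr i) (ha : a ∈ gr j) (hb : b ∈ gr k) :
    B (single 0 u) (single 0 a + single 1 b) 0
      = single 0 (br a u) + single 1 (c a u + br b u) + single 2 (c b u) := by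
  rw [map_add, Finsupp.add_apply, hB.single_zero_single_zero hu ha,
    hB.single_zero_single_one hu hb]
  simp [single_add, add_assoc]

lemma generator_linear_coeff_two (hu : u ∈ gr i) (ha : a ∈ gr j) (hb : b ∈ gr k) :
    B (single 0 u) (single 0 a + single 1 b) 2 = single 0 (c b u + sg i k • c u b) := by
  rw [map_add, Finsupp.add_apply, hB.single_zero_single_zero hu ha,
    hB.single_zero_single_one hu hb]
  simp

lemma linear_generator_coeff_zero (ha : a ∈ gr i) (hb : b ∈ gr j) (hu : u ∈ gr k) :
    B (single 0 a + single 1 b) (single 0 u) 0 = single 0 (br u a) + single 1 (c u a) := by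
  rw [map_add, LinearMap.add_apply, Finsupp.add_apply, hB.single_zero_single_zero ha hu,
    hB.single_one_single_zero hb hu]
  simp

lemma linear_generator_coeff_two (ha : a ∈ gr i) (hb : b ∈ gr j) (hu : u ∈ gr k) :
    B (single 0 a + single 1 b) (single 0 u) 2 = -single 0 (c u b + sg j k • c b u) := by
  rw [map_add, LinearMap.add_apply, Finsupp.add_apply, hB.single_zero_single_zero ha hu,
    hB.single_one_single_zero hb hu]
  simp

end AssocBracket

namespace HomLieConformalSuper

variable {M : Type*} [AddCommGroup M] [Module ℂ M] {grM : ZMod 2 → Submodule ℂ M}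
  {dM αM : M →ₗ[ℂ] M} {B : M →ₗ[ℂ] M →ₗ[ℂ] (ℕ →₀ M)}

lemma jacobi_coeff_zero (hC : HomLieConformalSuper grM dM B αM) {i j k : ZMod 2} {x y z : M}
    (hx : x ∈ grM i) (hy : y ∈ grM j) (hz : z ∈ grM k) (b : ℕ) :
    B (αM x) (B y z b) 0 = B (B x y 0) (αM z) b + sg i j • B (αM y) (B x z 0) b := by
  have h := congrArg (· (0, b)) (hC.2.2.2.2.2.2 i j k x hx y hy z hz)
  simpa only [Finsupp.add_apply, Finsupp.smul_apply, map_zero, LinearMap.zero_apply,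
    sum_sum_single_apply, sum_sum_single_swap_apply, sum_sum_binomial_apply_zero] using h

end HomLieConformalSuper

section Generators

variable {gr : ZMod 2 → Submodule ℂ A} {br c : A →ₗ[ℂ] A →ₗ[ℂ] A} {α : A →ₗ[ℂ] A}
  {B : (ℕ →₀ A) →ₗ[ℂ] (ℕ →₀ A) →ₗ[ℂ] (ℕ →₀ (ℕ →₀ A))}

lemma evenLin_of_homLieConformalSuper
    (hC : HomLieConformalSuper (grFinsupp ℕ gr) dR B (mapRange.linearMap α)) :
    EvenLin gr α := by
  intro i x hx
  simpa using hC.2.1 i _ (single_mem_grFinsupp 0 hx) 0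

variable (hB : AssocBracket gr br c B)
  (hC : HomLieConformalSuper (grFinsupp ℕ gr) dR B (mapRange.linearMap α))
include hB hC

lemma evenBilin_br_of_homLieConformalSuper : EvenBilin gr br := by
  intro i j x hx y hy
  have h := hC.2.2.1 j i _ (single_mem_grFinsupp 0 hy) _ (single_mem_grFinsupp 0 hx) 0 0
  rw [hB.single_zero_single_zero hy hx, add_comm j] at h
  simpa using h

lemma evenBilin_c_of_homLieConformalSuper : EvenBilin gr c := by
  intro i j x hx y hy
  have h := hC.2.2.1 j i _ (single_mem_grFinsupp 0 hy) _ (single_mem_grFinsupp 0 hx) 0 1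
  rw [hB.single_zero_single_zero hy hx, add_comm j] at h
  simpa using h

lemma br_skew_of_homLieConformalSuper (i j : ZMod 2) (x : A) (hx : x ∈ gr i) (y : A)
    (hy : y ∈ gr j) : br x y = -(sg i j • br y x) := by
  have h := congrArg (· 0 0)
    (hC.2.2.2.2.2.1 j i _ (single_mem_grFinsupp 0 hy) _ (single_mem_grFinsupp 0 hx))
  rw [hB.single_zero_single_zero hy hx, hB.single_zero_single_zero hx hy, sg_comm] at h
  simpa [negSubst_dR_apply_zero_zero] using h

lemma jacobi_generators_coeff_zero {i j k : ZMod 2} {x y z : A} (hx : x ∈ gr i) (hy : y ∈ gr j)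
    (hz : z ∈ gr k) :
    single 0 (br (br z y) (α x)) + single 1 (c (br z y) (α x) + br (c z y) (α x))
        + single 2 (c (c z y) (α x))
      = single 0 (br (α z) (br y x)) + single 1 (c (α z) (br y x))
        + sg i j • (single 0 (br (br z x) (α y)) + single 1 (c (br z x) (α y) + br (c z x) (α y))
          + single 2 (c (c z x) (α y))) := by
  have hα := evenLin_of_homLieConformalSuper hC
  have hbr := evenBilin_br_of_homLieConformalSuper hB hC
  have hc := evenBilin_c_of_homLieConformalSuper hB hC
  have h := hC.jacobi_coeff_zero (single_mem_grFinsupp 0 hx) (single_mem_grFinsupp 0 hy)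
    (single_mem_grFinsupp 0 hz) 0
  simp only [mapRange.linearMap_apply, mapRange_single, hB.single_zero_single_zero hx hy,
    hB.single_zero_single_zero hx hz, hB.single_zero_single_zero hy hz, genBr_apply_zero] at h
  rwa [hB.generator_linear_coeff_zero (hα i x hx) (hbr k j z hz y hy) (hc k j z hz y hy),
    hB.generator_linear_coeff_zero (hα j y hy) (hbr k i z hz x hx) (hc k i z hz x hx),
    hB.linear_generator_coeff_zero (hbr j i y hy x hx) (hc j i y hy x hx) (hα k z hz)] at h

lemma jacobi_generators_coeff_two {i j k : ZMod 2} {x y z : A} (hx : x ∈ gr i) (hy : y ∈ gr j)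
    (hz : z ∈ gr k) :
    c (α z) (c y x) + sg (j + i) k • c (c y x) (α z)
      = sg i j • (c (c z x) (α y) + sg j (k + i) • c (α y) (c z x)) := by
  have hα := evenLin_of_homLieConformalSuper hC
  have hbr := evenBilin_br_of_homLieConformalSuper hB hC
  have hc := evenBilin_c_of_homLieConformalSuper hB hC
  have h := hC.jacobi_coeff_zero (single_mem_grFinsupp 0 hx) (single_mem_grFinsupp 0 hy)
    (single_mem_grFinsupp 0 hz) 2
  simp only [mapRange.linearMap_apply, mapRange_single, hB.single_zero_single_zero hx hy,
    hB.single_zero_single_zero hx hz, hB.single_zero_single_zero hy hz, genBr_apply_zero,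
    genBr_apply_two] at h
  rw [hB.generator_linear_coeff_two (hα j y hy) (hbr k i z hz x hx) (hc k i z hz x hx),
    hB.linear_generator_coeff_two (hbr j i y hy x hx) (hc j i y hy x hx) (hα k z hz)] at h
  have h0 : 0 = -(c (α z) (c y x) + sg (j + i) k • c (c y x) (α z))
      + sg i j • (c (c z x) (α y) + sg j (k + i) • c (α y) (c z x)) := by
    simpa using congrArg (· 0) h
  linear_combination (norm := module) h0

end Generators

section Axioms

variable {gr : ZMod 2 → Submodule ℂ A} {br c : A →ₗ[ℂ] A →ₗ[ℂ] A} {α : A →ₗ[ℂ] A}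
  {B : (ℕ →₀ A) →ₗ[ℂ] (ℕ →₀ A) →ₗ[ℂ] (ℕ →₀ (ℕ →₀ A))}
  (hB : AssocBracket gr br c B)
  (hC : HomLieConformalSuper (grFinsupp ℕ gr) dR B (mapRange.linearMap α))
include hB hC

lemma br_homJacobi_of_homLieConformalSuper (i j k : ZMod 2) (x : A) (hx : x ∈ gr i) (y : A)
    (hy : y ∈ gr j) (z : A) (hz : z ∈ gr k) :
    sg i k • br (br x y) (α z) + sg i j • br (br y z) (α x)
      + sg j k • br (br z x) (α y) = 0 := by
  have hskew := br_skew_of_homLieConformalSuper hB hC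
  have h : br (br z y) (α x) = br (α z) (br y x) + sg i j • br (br z x) (α y) := by
    simpa using congrArg (· 0) (jacobi_generators_coeff_zero hB hC hx hy hz)
  rw [hskew k j z hz y hy, hskew j i y hy x hx, map_neg, map_smul, LinearMap.neg_apply,
    LinearMap.smul_apply, map_neg, map_smul,
    hskew k (i + j) (α z) (evenLin_of_homLieConformalSuper hC k z hz) (br x y)
      (evenBilin_br_of_homLieConformalSuper hB hC i j x hx y hy),
    sg_add_right, sg_comm k i, sg_comm k j, sg_comm j i] at h
  have := sg_mul_self i j
  have := sg_mul_self i k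
  have := sg_mul_self j k
  linear_combination (norm := (match_scalars <;> grind)) (-(sg i j * sg j k)) • h

lemma compatibility_of_homLieConformalSuper (i j k : ZMod 2) (x : A) (hx : x ∈ gr i) (y : A)
    (hy : y ∈ gr j) (z : A) (hz : z ∈ gr k) :
    br (c x y) (α z) - sg j k • br (c x z) (α y) + c (br x y) (α z)
      - sg j k • c (br x z) (α y) - c (α x) (br y z) = 0 := by
  have h : c (br x y) (α z) + br (c x y) (α z)
      = c (α x) (br y z) + sg j k • (c (br x z) (α y) + br (c x z) (α y)) := by
    simpa [sg_comm k j] using congrArg (· 1) (jacobi_generators_coeff_zero hB hC hz hy hx)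
  linear_combination (norm := module) h

lemma novikov_right_of_homLieConformalSuper (i j k : ZMod 2) (x : A) (hx : x ∈ gr i) (y : A)
    (hy : y ∈ gr j) (z : A) (hz : z ∈ gr k) :
    c (c x y) (α z) = sg j k • c (c x z) (α y) := by
  simpa [sg_comm k j] using congrArg (· 2) (jacobi_generators_coeff_zero hB hC hz hy hx)

lemma novikov_left_of_homLieConformalSuper (i j k : ZMod 2) (x : A) (hx : x ∈ gr i) (y : A)
    (hy : y ∈ gr j) (z : A) (hz : z ∈ gr k) :
    c (c x y) (α z) - c (α x) (c y z) = sg i j • (c (c y x) (α z) - c (α y) (c x z)) := by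
  have h := jacobi_generators_coeff_two hB hC hz hy hx
  rw [novikov_right_of_homLieConformalSuper hB hC j k i y hy z hz x hx,
    novikov_right_of_homLieConformalSuper hB hC i k j x hx z hz y hy,
    sg_add_left, sg_add_right, sg_comm k i, sg_comm k j, sg_comm j i] at h
  have := sg_mul_self i j
  have := sg_mul_self i k
  have := sg_mul_self j k
  linear_combination (norm := (match_scalars <;> grind)) (-1 : ℂ) • h

end Axioms

theorem superHomGD_of_homLieConformalSuper_general
    {A : Type*} [AddCommGroup A] [Module ℂ A]
    (gr : ZMod 2 → Submodule ℂ A)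
    (br c : A →ₗ[ℂ] A →ₗ[ℂ] A) (α : A →ₗ[ℂ] A)
    (B : (ℕ →₀ A) →ₗ[ℂ] (ℕ →₀ A) →ₗ[ℂ] (ℕ →₀ (ℕ →₀ A)))
    (hB : AssocBracket gr br c B)
    (hC : HomLieConformalSuper (grFinsupp ℕ gr) dR B (Finsupp.mapRange.linearMap α)) :
    SuperHomGD gr br c α := by
  have hα : EvenLin gr α := evenLin_of_homLieConformalSuper hC
  exact
    ⟨⟨hα, evenBilin_br_of_homLieConformalSuper hB hC, br_skew_of_homLieConformalSuper hB hC,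
        br_homJacobi_of_homLieConformalSuper hB hC⟩,
      ⟨hα, evenBilin_c_of_homLieConformalSuper hB hC, novikov_left_of_homLieConformalSuper hB hC,
        novikov_right_of_homLieConformalSuper hB hC⟩,
      compatibility_of_homLieConformalSuper hB hC⟩

/-- If `R = ℂ[∂] ⊗ A` with the λ-bracket
`[u_λ v] = [v,u] + (∂+λ)(v∘u) + (−1)^{|u||v|} λ (u∘v)` (extended by
`[f(∂)u_λ h(∂)v] = f(−λ)h(∂+λ)[u_λ v]`) and with `α` extended `ℂ[∂]`-linearly is a
Hom-Lie conformal superalgebra, then `(A, [·,·], ∘, α)` is a super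
Hom-Gel'fand-Dorfman bialgebra. -/
theorem superHomGD_of_homLieConformalSuper
    {A : Type*} [AddCommGroup A] [Module ℂ A]
    (gr : ZMod 2 → Submodule ℂ A) (hgr : IsSupergrading gr)
    (br c : A →ₗ[ℂ] A →ₗ[ℂ] A) (α : A →ₗ[ℂ] A)
    (B : (ℕ →₀ A) →ₗ[ℂ] (ℕ →₀ A) →ₗ[ℂ] (ℕ →₀ (ℕ →₀ A)))
    (hB : AssocBracket gr br c B)
    (hC : HomLieConformalSuper (grFinsupp ℕ gr) dR B (Finsupp.mapRange.linearMap α)) :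
    SuperHomGD gr br c α :=
  superHomGD_of_homLieConformalSuper_general gr br c α B hB hC

end
end

section
/- Let (A,[·,·],∘,α) be a super Hom-Gel'fand-Dorfman bialgebra and let f_λ be a 2-cocycle on the associated quadratic Hom-Lie conformal superalgebra whose restriction to A × A has the form f_λ(u,v) = Σ_{i=0}^{n} λ^i f_i(u,v) with bilinear maps f_i: A × A → ℂ and f_n ≠ 0. If n > 3, then f_n(u∘v, α(w)) = 0 for all homogeneous u,v,w ∈ A. -/
noncomputable section

variable {A : Type*} [AddCommGroup A] [Module ℂ A]

section Cocycle

variable {M : Type*} [AddCommGroup M] [Module ℂ M]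

/-- A 2-cocycle `f_λ : M × M → ℂ[λ]` on a Hom-Lie conformal superalgebra
`(M, grM, dM, B, αM)`.  The cocycle identity
`f_{λ+μ}([u_λ v], α(w)) = f_λ(α(u), [v_μ w]) − (−1)^{|u||v|} f_μ(α(v), [u_λ w])`
is stated in `ℂ[λ,μ] = MvPolynomial (Fin 2) ℂ`, where `λ = X 0` and `μ = X 1`. -/
def IsCocycle (grM : ZMod 2 → Submodule ℂ M) (dM : M →ₗ[ℂ] M)
    (B : M →ₗ[ℂ] M →ₗ[ℂ] (ℕ →₀ M)) (αM : M →ₗ[ℂ] M)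
    (cf : M →ₗ[ℂ] M →ₗ[ℂ] Polynomial ℂ) : Prop :=
  -- skew-symmetry `f_λ(u,v) = −(−1)^{|u||v|} f_{−λ}(v,u)` (note `∂ 𝔠 = 0`)
  (∀ (i j : ZMod 2), ∀ u ∈ grM i, ∀ v ∈ grM j,
    cf u v = -(sg i j • (cf v u).comp (-Polynomial.X))) ∧
  -- conformal sesquilinearity `f_λ(∂u, v) = −λ f_λ(u,v) = −f_λ(u, ∂v)`
  (∀ u v : M, cf (dM u) v = -(Polynomial.X * cf u v)) ∧
  (∀ u v : M, cf u (dM v) = Polynomial.X * cf u v) ∧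
  -- the cocycle identity
  (∀ (i j k : ZMod 2), ∀ u ∈ grM i, ∀ v ∈ grM j, ∀ w ∈ grM k,
    ((B u v).sum fun n r => (MvPolynomial.X 0 : MvPolynomial (Fin 2) ℂ) ^ n
        * Polynomial.aeval
            (MvPolynomial.X 0 + MvPolynomial.X 1 : MvPolynomial (Fin 2) ℂ)
            (cf r (αM w)))
    = ((B v w).sum fun m s => (MvPolynomial.X 1 : MvPolynomial (Fin 2) ℂ) ^ m
        * Polynomial.aeval (MvPolynomial.X 0 : MvPolynomial (Fin 2) ℂ)
            (cf (αM u) s))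
      - sg i j • ((B u w).sum fun n s =>
          (MvPolynomial.X 0 : MvPolynomial (Fin 2) ℂ) ^ n
            * Polynomial.aeval (MvPolynomial.X 1 : MvPolynomial (Fin 2) ℂ)
                (cf (αM v) s)))

end Cocycle

/-! Write `λ = X 0`, `μ = X 1`, and `P₁, P₂, P₃` for `f_λ(·, αw)` at `[v,u]`, `v∘u` and
`v∘u ± u∘v`. On generators the cocycle identity reads `P₁(λ+μ) − (λ+μ)P₂(λ+μ) + λP₃(λ+μ) = R`,
where each summand of `R` has degree at most one in `λ` or in `μ`. Hence `∂_λ²∂_μ²` kills `R`;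
since `1` and `λ` are independent over `ℂ[λ+μ]`, this leaves `P₃⁽⁴⁾ = 0` and
`P₁⁽⁴⁾ − (XP₂)⁽⁴⁾ + 2P₃⁽³⁾ = 0`. As `deg P₁ ≤ n`, the coefficients of degree `n − 4` and `n − 3`
give `f_n(v∘u ± u∘v, αw) = 0` and `f_n(v∘u, αw) = 0`. -/


open MvPolynomial

section Bivariate

variable {R : Type*} [CommRing R]

def crossDeriv (q : MvPolynomial (Fin 2) R) : MvPolynomial (Fin 2) R :=
  pderiv 0 (pderiv 0 (pderiv 1 (pderiv 1 q)))

theorem crossDeriv_aeval_X_combination_eq_zero (G₀ G₁ G₂ H₀ H₁ H₂ : Polynomial R) (s : R) :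
    crossDeriv (Polynomial.aeval (X 0 : MvPolynomial (Fin 2) R) G₀
      + X 0 * Polynomial.aeval (X 0) G₁ + X 1 * Polynomial.aeval (X 0) G₂
      - C s * (Polynomial.aeval (X 1) H₀ + X 1 * Polynomial.aeval (X 1) H₁
        + X 0 * Polynomial.aeval (X 1) H₂)) = 0 := by
  simp [crossDeriv, Derivation.leibniz, pderiv_X]

theorem crossDeriv_aeval_X_add_X (P Q : Polynomial R) :
    crossDeriv (Polynomial.aeval (X 0 + X 1 : MvPolynomial (Fin 2) R) P
      + X 0 * Polynomial.aeval (X 0 + X 1) Q)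
    = Polynomial.aeval (X 0 + X 1 : MvPolynomial (Fin 2) R)
        (Polynomial.derivative^[4] P + 2 * Polynomial.derivative^[3] Q)
      + X 0 * Polynomial.aeval (X 0 + X 1) (Polynomial.derivative^[4] Q) := by
  simp only [crossDeriv, map_add, map_mul, map_ofNat, Derivation.map_aeval, Derivation.leibniz,
    pderiv_X_self, pderiv_X_of_ne one_ne_zero, pderiv_X_of_ne zero_ne_one, smul_eq_mul, mul_one,
    mul_zero, add_zero, zero_add, Function.iterate_succ, Function.iterate_zero, Function.comp_apply,
    id_eq]
  ring

theorem eq_zero_of_aeval_X_add_X_add_X_mul_eq_zero [IsDomain R] {P Q : Polynomial R}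
    (h : Polynomial.aeval (X 0 + X 1 : MvPolynomial (Fin 2) R) P
      + X 0 * Polynomial.aeval (X 0 + X 1) Q = 0) : P = 0 ∧ Q = 0 := by
  have h₀ := congrArg (aeval (R := R) ![(Polynomial.X : Polynomial R), 0]) h
  have h₁ := congrArg (aeval (R := R) ![0, (Polynomial.X : Polynomial R)]) h
  simp only [map_add, map_mul, map_zero, ← Polynomial.aeval_algHom_apply, aeval_X,
    Matrix.cons_val_zero, Matrix.cons_val_one, Matrix.cons_val_fin_one, add_zero, zero_add,
    zero_mul, Polynomial.aeval_X_left, AlgHom.coe_id, id_eq] at h₀ h₁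
  subst h₁
  simpa using h₀

theorem top_coeff_eq_zero_of_aeval_X_add_X_eq [IsDomain R] [CharZero R]
    {P₁ P₂ P₃ G₀ G₁ G₂ H₀ H₁ H₂ : Polynomial R} {s : R} {n : ℕ} (hn : 4 ≤ n)
    (hP₁ : P₁.coeff (n + 1) = 0)
    (h : Polynomial.aeval (X 0 + X 1 : MvPolynomial (Fin 2) R) P₁
        - (X 0 + X 1) * Polynomial.aeval (X 0 + X 1) P₂ + X 0 * Polynomial.aeval (X 0 + X 1) P₃
      = Polynomial.aeval (X 0) G₀ + X 0 * Polynomial.aeval (X 0) G₁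
        + X 1 * Polynomial.aeval (X 0) G₂
        - C s * (Polynomial.aeval (X 1) H₀ + X 1 * Polynomial.aeval (X 1) H₁
          + X 0 * Polynomial.aeval (X 1) H₂)) :
    P₂.coeff n = 0 ∧ P₃.coeff n = 0 := by
  obtain ⟨m, rfl⟩ : ∃ m, n = m + 4 := ⟨n - 4, by omega⟩
  have hD := congrArg crossDeriv h
  rw [crossDeriv_aeval_X_combination_eq_zero,
    show Polynomial.aeval (X 0 + X 1 : MvPolynomial (Fin 2) R) P₁
        - (X 0 + X 1) * Polynomial.aeval (X 0 + X 1) P₂ + X 0 * Polynomial.aeval (X 0 + X 1) P₃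
      = Polynomial.aeval (X 0 + X 1) (P₁ - Polynomial.X * P₂)
        + X 0 * Polynomial.aeval (X 0 + X 1) P₃ by simp,
    crossDeriv_aeval_X_add_X] at hD
  obtain ⟨hlow, htop⟩ := eq_zero_of_aeval_X_add_X_add_X_mul_eq_zero hD
  have h₃ : P₃.coeff (m + 4) = 0 := by
    have := congrArg (Polynomial.coeff · m) htop
    simp only [Polynomial.coeff_iterate_derivative, Polynomial.coeff_zero] at this
    exact (smul_eq_zero.mp this).resolve_left (by simp)
  refine ⟨?_, h₃⟩
  have := congrArg (Polynomial.coeff · (m + 1)) hlow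
  simp only [Polynomial.coeff_add, Polynomial.coeff_ofNat_mul, Polynomial.coeff_iterate_derivative,
    Polynomial.coeff_sub, Polynomial.coeff_X_mul, Polynomial.coeff_zero] at this
  rw [h₃, hP₁] at this
  simp only [zero_sub, smul_neg, smul_zero, mul_zero, add_zero, neg_eq_zero] at this
  exact (smul_eq_zero.mp this).resolve_left (by simp)

end Bivariate

section Generators

variable {A : Type*} [AddCommGroup A] [Module ℂ A] {gr : ZMod 2 → Submodule ℂ A}
  {br c : A →ₗ[ℂ] A →ₗ[ℂ] A} {α : A →ₗ[ℂ] A}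
  {B : (ℕ →₀ A) →ₗ[ℂ] (ℕ →₀ A) →ₗ[ℂ] (ℕ →₀ (ℕ →₀ A))}
  {cf : (ℕ →₀ A) →ₗ[ℂ] (ℕ →₀ A) →ₗ[ℂ] Polynomial ℂ}

theorem single_mem_grFinsupp_s15 {σ : Type*} (a : σ) {i : ZMod 2} {x : A} (hx : x ∈ gr i) :
    Finsupp.single a x ∈ grFinsupp σ gr i := by
  classical
  intro s
  rw [Finsupp.single_apply]
  split_ifs
  · exact hx
  · exact zero_mem _

theorem dR_single_s15 (p : ℕ) (x : A) : dR (Finsupp.single p x) = Finsupp.single (p + 1) x := by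
  simp [dR]

theorem AssocBracket.apply_single_zero (hB : AssocBracket gr br c B) {i j : ZMod 2} {u v : A}
    (hu : u ∈ gr i) (hv : v ∈ gr j) :
    B (Finsupp.single 0 u) (Finsupp.single 0 v) = genBr br c (sg i j) u v := by
  simpa using hB 0 0 i j u hu v hv

theorem sum_genBr {N : Type*} [AddCommMonoid N] {s : ℂ} {u v : A} {g : ℕ → (ℕ →₀ A) → N}
    (hg₀ : ∀ n, g n 0 = 0) (hg : ∀ n x y, g n (x + y) = g n x + g n y) :
    (genBr br c s u v).sum g
      = g 0 (Finsupp.single 0 (br v u) + Finsupp.single 1 (c v u))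
        + g 1 (Finsupp.single 0 (c v u + s • c u v)) := by
  rw [genBr, Finsupp.sum_add_index' (by simp [hg₀]) (by simp [hg]),
    Finsupp.sum_single_index (hg₀ 0), Finsupp.sum_single_index (hg₀ 1)]

variable (cf) in
def restrictGen : A →ₗ[ℂ] A →ₗ[ℂ] Polynomial ℂ :=
  cf.compl₁₂ (Finsupp.lsingle 0) (Finsupp.lsingle 0)

theorem IsCocycle.identity_on_generators
    (hcoc : IsCocycle (grFinsupp ℕ gr) dR B (Finsupp.mapRange.linearMap α) cf)
    (hB : AssocBracket gr br c B) {i j k : ZMod 2} {u v w : A}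
    (hu : u ∈ gr i) (hv : v ∈ gr j) (hw : w ∈ gr k) :
    Polynomial.aeval (X 0 + X 1 : MvPolynomial (Fin 2) ℂ) (restrictGen cf (br v u) (α w))
        - (X 0 + X 1) * Polynomial.aeval (X 0 + X 1) (restrictGen cf (c v u) (α w))
        + X 0 * Polynomial.aeval (X 0 + X 1) (restrictGen cf (c v u + sg i j • c u v) (α w))
      = Polynomial.aeval (X 0) (restrictGen cf (α u) (br w v))
        + X 0 * Polynomial.aeval (X 0) (restrictGen cf (α u) (c w v))
        + X 1 * Polynomial.aeval (X 0) (restrictGen cf (α u) (c w v + sg j k • c v w))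
        - C (sg i j) * (Polynomial.aeval (X 1) (restrictGen cf (α v) (br w u))
          + X 1 * Polynomial.aeval (X 1) (restrictGen cf (α v) (c w u))
          + X 0 * Polynomial.aeval (X 1) (restrictGen cf (α v) (c w u + sg i k • c u w))) := by
  have h := hcoc.2.2.2 i j k _ (single_mem_grFinsupp_s15 0 hu) _ (single_mem_grFinsupp_s15 0 hv) _
    (single_mem_grFinsupp_s15 0 hw)
  rw [hB.apply_single_zero hu hv, hB.apply_single_zero hv hw, hB.apply_single_zero hu hw,
    sum_genBr (fun n => by simp) (fun n x y => by simp [mul_add]),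
    sum_genBr (fun n => by simp) (fun n x y => by simp [mul_add]),
    sum_genBr (fun n => by simp) (fun n x y => by simp [mul_add])] at h
  have hd (x : A) : Finsupp.single 1 x = dR (Finsupp.single 0 x) := (dR_single_s15 0 x).symm
  simp only [pow_zero, pow_one, one_mul, hd, map_add, map_mul,
    LinearMap.add_apply, Finsupp.mapRange.linearMap_apply, Finsupp.mapRange_single, hcoc.2.1,
    hcoc.2.2.1, Polynomial.aeval_neg, Polynomial.aeval_X, Finsupp.single_add, smul_add,
    smul_eq_C_mul] at h
  simp only [restrictGen, LinearMap.compl₁₂_apply, Finsupp.lsingle_apply, map_add,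
    LinearMap.add_apply]
  linear_combination h

end Generators

theorem cocycle_top_coeff_vanishes_general
    {A : Type*} [AddCommGroup A] [Module ℂ A]
    (gr : ZMod 2 → Submodule ℂ A)
    (br c : A →ₗ[ℂ] A →ₗ[ℂ] A) (α : A →ₗ[ℂ] A)
    (B : (ℕ →₀ A) →ₗ[ℂ] (ℕ →₀ A) →ₗ[ℂ] (ℕ →₀ (ℕ →₀ A)))
    (hB : AssocBracket gr br c B)
    (cf : (ℕ →₀ A) →ₗ[ℂ] (ℕ →₀ A) →ₗ[ℂ] Polynomial ℂ)
    (hcoc : IsCocycle (grFinsupp ℕ gr) dR B (Finsupp.mapRange.linearMap α) cf)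
    (n : ℕ) (f : ℕ → (A →ₗ[ℂ] A →ₗ[ℂ] ℂ))
    (hres : ∀ u v : A, cf (Finsupp.single 0 u) (Finsupp.single 0 v)
      = ∑ i ∈ Finset.range (n + 1), Polynomial.C (f i u v) * Polynomial.X ^ i)
    (hn : 3 < n) :
    ∀ (i j k : ZMod 2), ∀ u ∈ gr i, ∀ v ∈ gr j, ∀ w ∈ gr k,
      f n (c u v) (α w) = 0 := by
  intro i j k u hu v hv w hw
  have hcoeff : ∀ x y t, (restrictGen cf x y).coeff t = if t < n + 1 then f t x y else 0 :=
    fun x y t => by simp [restrictGen, hres, Polynomial.finsetSum_coeff]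
  obtain ⟨hvu, hsum⟩ := top_coeff_eq_zero_of_aeval_X_add_X_eq hn (by simp [hcoeff])
    (hcoc.identity_on_generators hB hu hv hw)
  simp only [hcoeff, lt_add_one, if_true] at hvu hsum
  simp only [map_add, map_smul, LinearMap.add_apply, LinearMap.smul_apply, smul_eq_mul, hvu,
    zero_add] at hsum
  exact (mul_eq_zero.mp hsum).resolve_left (pow_ne_zero _ (by norm_num))

/-- Let `f_λ` be a 2-cocycle on the quadratic Hom-Lie conformal
superalgebra associated to a super Hom-Gel'fand-Dorfman bialgebra
`(A, [·,·], ∘, α)`, with `f_λ(u,v) = ∑_{i=0}^{n} λ^i f_i(u,v)` on `A × A` and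
`f_n ≠ 0`.  If `n > 3`, then `f_n(u∘v, α(w)) = 0` for all homogeneous `u,v,w ∈ A`. -/
theorem cocycle_top_coeff_vanishes
    {A : Type*} [AddCommGroup A] [Module ℂ A]
    (gr : ZMod 2 → Submodule ℂ A) (hgr : IsSupergrading gr)
    (br c : A →ₗ[ℂ] A →ₗ[ℂ] A) (α : A →ₗ[ℂ] A)
    (hGD : SuperHomGD gr br c α)
    (B : (ℕ →₀ A) →ₗ[ℂ] (ℕ →₀ A) →ₗ[ℂ] (ℕ →₀ (ℕ →₀ A)))
    (hB : AssocBracket gr br c B)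
    (cf : (ℕ →₀ A) →ₗ[ℂ] (ℕ →₀ A) →ₗ[ℂ] Polynomial ℂ)
    (hcoc : IsCocycle (grFinsupp ℕ gr) dR B (Finsupp.mapRange.linearMap α) cf)
    (n : ℕ) (f : ℕ → (A →ₗ[ℂ] A →ₗ[ℂ] ℂ))
    (hres : ∀ u v : A, cf (Finsupp.single 0 u) (Finsupp.single 0 v)
      = ∑ i ∈ Finset.range (n + 1), Polynomial.C (f i u v) * Polynomial.X ^ i)
    (hfn : f n ≠ 0) (hn : 3 < n) :
    ∀ (i j k : ZMod 2), ∀ u ∈ gr i, ∀ v ∈ gr j, ∀ w ∈ gr k,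
      f n (c u v) (α w) = 0 :=
  cocycle_top_coeff_vanishes_general gr br c α B hB cf hcoc n f hres hn

end
end
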